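/- arXiv:1509.00175 — 3 statements merged into one kernel-verified Lean document; each statement's English description precedes it below -/
import Mathlib

section
/- Let 0 < C₁ < C₀ be real constants and let b : ℝ → ℝ be a monotone non-increasing C^∞ function such that b(X) = 1 if and only if X ≤ C₁, and b(X) = 0 if and only if X ≥ C₀ (so 0 ≤ b(X) ≤ 1 for all X). Then for every real number R > 1, the set of nonzero complex numbers z satisfying b(log_R|z|) + b(−log_R|z|)·z = 0 is exactly {−1}. (Here log_R|z| := log|z| / log R.) -/
/-- The defining equation of the tropical localization on the region of a bounded
edge, `b(log_R|z|) + b(-log_R|z|)·z = 0`, has exactly the solution `z = -1`. -/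
theorem stmt_0 (C₀ C₁ : ℝ) (hC₁ : 0 < C₁) (hC : C₁ < C₀)
    (b : ℝ → ℝ) (hmono : Antitone b) (hsmooth : ContDiff ℝ (⊤ : ℕ∞) b)
    (h1 : ∀ X : ℝ, b X = 1 ↔ X ≤ C₁) (h0 : ∀ X : ℝ, b X = 0 ↔ X ≥ C₀)
    (hrange : ∀ X : ℝ, 0 ≤ b X ∧ b X ≤ 1) :
    ∀ R : ℝ, 1 < R →
      {z : ℂ | z ≠ 0 ∧
          (b (Real.log (‖z‖) / Real.log R) : ℂ) +
            (b (-(Real.log (‖z‖) / Real.log R)) : ℂ) * z = 0} = {-1} := by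
  intro R hR
  have hlogR : 0 < Real.log R := Real.log_pos hR
  have hb0 : b 0 = 1 := (h1 0).mpr (le_of_lt hC₁)
  ext z
  simp only [Set.mem_setOf_eq, Set.mem_singleton_iff]
  constructor
  · rintro ⟨hz, heq⟩
    set t := Real.log (‖z‖) / Real.log R with ht
    have hbneg : b (-t) ≠ 0 := by
      intro h
      rw [h] at heq
      simp only [Complex.ofReal_zero, zero_mul, add_zero] at heq
      have heq' : b t = 0 := by exact_mod_cast heq
      have h1' : t ≥ C₀ := (h0 t).mp heq'
      have h2' : -t ≥ C₀ := (h0 (-t)).mp h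
      linarith
    have hne : (b (-t) : ℂ) ≠ 0 := by exact_mod_cast hbneg
    have hzval : z = -((b t : ℂ) / (b (-t) : ℂ)) := by
      field_simp
      linear_combination heq
    have hbt : b t ≠ 0 := by
      intro h
      rw [h] at hzval
      simp at hzval
      exact hz hzval
    have hbt_pos : 0 < b t := lt_of_le_of_ne (hrange t).1 (Ne.symm hbt)
    have hbneg_pos : 0 < b (-t) := lt_of_le_of_ne (hrange (-t)).1 (Ne.symm hbneg)
    have habs : ‖z‖ = b t / b (-t) := by
      have hz2 : z = ((-(b t / b (-t)) : ℝ) : ℂ) := by push_cast; rw [hzval]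
      rw [hz2, Complex.norm_real, Real.norm_eq_abs, abs_neg, abs_div, abs_of_pos hbt_pos,
        abs_of_pos hbneg_pos]
    have habs_pos : 0 < ‖z‖ := norm_pos_iff.mpr hz
    have hlog : Real.log (‖z‖) = t * Real.log R := by
      rw [ht, div_mul_cancel₀ _ hlogR.ne']
    have ht0 : t = 0 := by
      rcases lt_trichotomy t 0 with h | h | h
      · exfalso
        have hzlt : ‖z‖ < 1 := by
          have : Real.log (‖z‖) < 0 := by nlinarith
          exact (Real.log_neg_iff habs_pos).mp this
        have hge : (1 : ℝ) ≤ b t / b (-t) := by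
          have : b (-t) ≤ b t := hmono (by linarith)
          rw [one_le_div hbneg_pos]
          exact this
        rw [habs] at hzlt
        linarith
      · exact h
      · exfalso
        have hzgt : 1 < ‖z‖ := by
          have : 0 < Real.log (‖z‖) := by nlinarith
          exact (Real.log_pos_iff habs_pos.le).mp this
        have hle : b t / b (-t) ≤ 1 := by
          have : b t ≤ b (-t) := hmono (by linarith)
          rw [div_le_one hbneg_pos]
          exact this
        rw [habs] at hzgt
        linarith
    rw [ht0] at hzval
    rw [neg_zero, hb0] at hzval
    simpa using hzval
  · rintro rfl
    have habs : ‖(-1 : ℂ)‖ = 1 := by simp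
    refine ⟨by norm_num, ?_⟩
    rw [habs, Real.log_one, zero_div, neg_zero, hb0]
    norm_num
end

section
/- Let n ≥ 0, let A be a nonempty finite set of points of ℤ^{n+1}, let v : A → ℝ, and define trop(F) : ℝ^{n+1} → ℝ by trop(F)(X) = max_{m∈A}(v(m) + ⟨m, X⟩). For X ∈ ℝ^{n+1} let A_X := {m ∈ A : v(m) + ⟨m, X⟩ = trop(F)(X)} be the set of maximizers. Assume that A_X is affinely independent (as a subset of ℝ^{n+1}) for every X ∈ ℝ^{n+1}. Then for every X₀ ∈ ℝ^{n+1}, the affine span of the set μ := {X ∈ ℝ^{n+1} : A_X = A_{X₀}} has dimension n + 2 − |A_{X₀}|. Equivalently, a k-dimensional cell μ of the dual polyhedral decomposition satisfies |A_μ| = n + 2 − k. -/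
/-!
On the cell of `X₀`, with maximizer set `S`, the affine functions `v m + ⟨m, X⟩` for `m ∈ S` all
stay equal, so the cell lies in `X₀ + K` with `K` the annihilator of the differences `m - m'`
(`m, m' ∈ S`). Conversely, a small step from `X₀` in any direction of `K` keeps these functions
equal and all the others strictly smaller, so the cell affinely spans `X₀ + K`. Affine independence
of `S` makes the differences span a space of dimension `|S| - 1`, whence
`dim K = (n + 1) - (|S| - 1)`.
-/

open Filter Topology Module

section General

variable {𝕜 E α : Type*}

theorem Submodule.mem_dualCoannihilator_vectorSpan_image_iff [Field 𝕜] [AddCommGroup E]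
    [Module 𝕜 E] {p : α → Dual 𝕜 E} {s : Set α} {x : E} :
    x ∈ (vectorSpan 𝕜 (p '' s)).dualCoannihilator ↔ ∀ a ∈ s, ∀ b ∈ s, p a x = p b x := by
  rw [vectorSpan_def, ← SetLike.mem_coe, Submodule.coe_dualCoannihilator_span]
  simp only [Set.mem_ofPred_eq, ← Set.image2_vsub, Set.forall_mem_image2, Set.forall_mem_image,
    vsub_eq_sub, LinearMap.sub_apply, sub_eq_zero]

theorem finrank_dualCoannihilator_vectorSpan_add_card [Field 𝕜] [AddCommGroup E] [Module 𝕜 E]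
    [FiniteDimensional 𝕜 E] {p : α → Dual 𝕜 E} {s : Finset α} (hs : s.Nonempty)
    (hp : AffineIndependent 𝕜 fun a : (s : Set α) => p a) :
    finrank 𝕜 (vectorSpan 𝕜 (p '' s)).dualCoannihilator + s.card = finrank 𝕜 E + 1 := by
  have : Nonempty (s : Set α) := hs.to_subtype
  have hspan := hp.finrank_vectorSpan_add_one
  rw [← Set.image_eq_range, show Fintype.card (s : Set α) = s.card from Fintype.card_coe s] at hspan
  rw [← hspan, ← add_assoc, add_comm _ (finrank 𝕜 _),
    Subspace.finrank_add_finrank_dualCoannihilator_eq]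

end General

section Maximizers

variable {E α : Type*} [AddCommGroup E] [Module ℝ E]

open Classical in
noncomputable def maximizers (A : Finset α) (f : α → E →ᵃ[ℝ] ℝ) (X : E) : Finset α :=
  {m ∈ A | ∀ m' ∈ A, f m' X ≤ f m X}

def cell (A : Finset α) (f : α → E →ᵃ[ℝ] ℝ) (X₀ : E) : Set E :=
  {X | maximizers A f X = maximizers A f X₀}

variable {A : Finset α} {f : α → E →ᵃ[ℝ] ℝ}

theorem mem_maximizers {X : E} {m : α} :
    m ∈ maximizers A f X ↔ m ∈ A ∧ ∀ m' ∈ A, f m' X ≤ f m X := by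
  classical
  simp only [maximizers, Finset.mem_filter]

theorem maximizers_nonempty (hA : A.Nonempty) (X : E) : (maximizers A f X).Nonempty := by
  obtain ⟨m, hm, hmax⟩ := A.exists_max_image (fun m => f m X) hA
  exact ⟨m, mem_maximizers.2 ⟨hm, hmax⟩⟩

theorem mem_maximizers_iff_eq_sup' (hA : A.Nonempty) {X : E} {m : α} :
    m ∈ maximizers A f X ↔ m ∈ A ∧ f m X = A.sup' hA fun m => f m X := by
  rw [mem_maximizers, and_congr_right_iff]
  intro hm
  rw [le_antisymm_iff, Finset.sup'_le_iff, and_iff_right (Finset.le_sup' (fun m => f m X) hm)]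

theorem maximizers_subset (X : E) : maximizers A f X ⊆ A :=
  fun _ hm => (mem_maximizers.1 hm).1

theorem eq_of_mem_maximizers {X : E} {m m' : α} (hm : m ∈ maximizers A f X)
    (hm' : m' ∈ maximizers A f X) : f m X = f m' X :=
  le_antisymm ((mem_maximizers.1 hm').2 m (mem_maximizers.1 hm).1)
    ((mem_maximizers.1 hm).2 m' (mem_maximizers.1 hm').1)

theorem maximizers_eq_of_eq_of_lt {S : Finset α} {X : E} {c : ℝ} (hSA : S ⊆ A)
    (hS : S.Nonempty) (heq : ∀ m ∈ S, f m X = c) (hlt : ∀ m ∈ A, m ∉ S → f m X < c) :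
    maximizers A f X = S := by
  have hle : ∀ m ∈ A, f m X ≤ c := fun m hm => by
    by_cases hmS : m ∈ S
    exacts [(heq m hmS).le, (hlt m hm hmS).le]
  ext m
  rw [mem_maximizers]
  refine ⟨fun ⟨hmA, hmax⟩ => ?_, fun hmS => ⟨hSA hmS, fun m' hm' => heq m hmS ▸ hle m' hm'⟩⟩
  by_contra hmS
  obtain ⟨m₀, hm₀⟩ := hS
  exact (hlt m hmA hmS).not_ge (heq m₀ hm₀ ▸ hmax m₀ (hSA hm₀))

theorem linear_apply_sub_eq_of_mem_cell {X₀ X : E} (hX : X ∈ cell A f X₀) {m m' : α}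
    (hm : m ∈ maximizers A f X₀) (hm' : m' ∈ maximizers A f X₀) :
    (f m).linear (X - X₀) = (f m').linear (X - X₀) := by
  have hX : maximizers A f X = maximizers A f X₀ := hX
  rw [← vsub_eq_sub, AffineMap.linearMap_vsub, AffineMap.linearMap_vsub, vsub_eq_sub,
    vsub_eq_sub, eq_of_mem_maximizers hm hm', eq_of_mem_maximizers (hX ▸ hm) (hX ▸ hm')]

theorem eventually_maximizers_add_smul_eq (hA : A.Nonempty) {X₀ d : E}
    (hd : ∀ m ∈ maximizers A f X₀, ∀ m' ∈ maximizers A f X₀, (f m).linear d = (f m').linear d) :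
    ∀ᶠ t : ℝ in 𝓝 0, maximizers A f (X₀ + t • d) = maximizers A f X₀ := by
  set S := maximizers A f X₀
  obtain ⟨m₀, hm₀⟩ := maximizers_nonempty (f := f) hA X₀
  have hline : ∀ m (t : ℝ), f m (X₀ + t • d) = f m X₀ + t * (f m).linear d := by
    intro m t
    rw [add_comm, ← vadd_eq_add, AffineMap.map_vadd, vadd_eq_add, map_smul, smul_eq_mul, add_comm]
  have hstrict : ∀ᶠ t : ℝ in 𝓝 0, ∀ m ∈ A, m ∉ S →
      f m (X₀ + t • d) < f m₀ X₀ + t * (f m₀).linear d := by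
    rw [eventually_all_finset]
    intro m hm
    by_cases hmS : m ∈ S
    · exact Eventually.of_forall fun _ h => absurd hmS h
    have h0 : f m X₀ < f m₀ X₀ := by
      refine lt_of_le_of_ne ((mem_maximizers.1 hm₀).2 m hm) fun h => hmS ?_
      exact mem_maximizers.2 ⟨hm, fun m' hm' => h ▸ (mem_maximizers.1 hm₀).2 m' hm'⟩
    simp_rw [hline]
    refine Eventually.mono ?_ fun _ h _ => h
    exact ContinuousAt.eventually_lt (by fun_prop) (by fun_prop) (by simpa using h0)
  refine hstrict.mono fun t ht => maximizers_eq_of_eq_of_lt (maximizers_subset X₀) ⟨m₀, hm₀⟩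
    (fun m hm => ?_) ht
  rw [hline, eq_of_mem_maximizers hm hm₀, hd m hm m₀ hm₀]

theorem direction_affineSpan_cell (hA : A.Nonempty) (X₀ : E) :
    (affineSpan ℝ (cell A f X₀)).direction =
      (vectorSpan ℝ ((fun m => (f m).linear) '' maximizers A f X₀)).dualCoannihilator := by
  apply le_antisymm
  · have hspan : affineSpan ℝ (cell A f X₀) ≤ AffineSubspace.mk' X₀
        (vectorSpan ℝ ((fun m => (f m).linear) '' maximizers A f X₀)).dualCoannihilator := by
      rw [affineSpan_le]
      intro X hX
      rw [SetLike.mem_coe, AffineSubspace.mem_mk', vsub_eq_sub,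
        Submodule.mem_dualCoannihilator_vectorSpan_image_iff]
      exact fun m hm m' hm' => linear_apply_sub_eq_of_mem_cell hX hm hm'
    simpa using AffineSubspace.direction_le hspan
  · intro d hd
    rw [Submodule.mem_dualCoannihilator_vectorSpan_image_iff] at hd
    obtain ⟨t, ht, ht0⟩ := ((eventually_maximizers_add_smul_eq hA hd).filter_mono
      nhdsWithin_le_nhds |>.and (self_mem_nhdsWithin : ∀ᶠ t in 𝓝[≠] (0 : ℝ), t ≠ 0)).exists
    have hmem := AffineSubspace.vsub_mem_direction (subset_affineSpan ℝ (cell A f X₀) ht)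
      (subset_affineSpan ℝ (cell A f X₀) rfl)
    rw [vsub_eq_sub, add_sub_cancel_left] at hmem
    simpa [smul_smul, inv_mul_cancel₀ ht0] using Submodule.smul_mem _ t⁻¹ hmem

end Maximizers

noncomputable def monomialAffineMap {ι : Type*} [Fintype ι] [DecidableEq ι] (v : (ι → ℤ) → ℝ)
    (m : ι → ℤ) : (ι → ℝ) →ᵃ[ℝ] ℝ where
  toFun X := v m + ∑ i, (m i : ℝ) * X i
  linear := dotProductEquiv ℝ ι fun i => (m i : ℝ)
  map_vadd' X Y := by
    simp only [vadd_eq_add, Pi.add_apply, mul_add, Finset.sum_add_distrib,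
      dotProductEquiv_apply_apply, dotProduct]
    ring

/-- Mikhalkin's dimension count: for a smooth tropical hypersurface (all maximizer
sets affinely independent), the cell `{X | A_X = A_{X₀}}` has affine span of
dimension `n + 2 - |A_{X₀}|`. -/
theorem stmt_1 (n : ℕ) (A : Finset (Fin (n + 1) → ℤ)) (hA : A.Nonempty)
    (v : (Fin (n + 1) → ℤ) → ℝ)
    (trop : (Fin (n + 1) → ℝ) → ℝ)
    (htrop : ∀ X, trop X = A.sup' hA fun m => v m + ∑ i, (m i : ℝ) * X i)
    (AX : (Fin (n + 1) → ℝ) → Finset (Fin (n + 1) → ℤ))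
    (hAX : ∀ X, AX X = A.filter fun m => v m + ∑ i, (m i : ℝ) * X i = trop X)
    (hindep : ∀ X, AffineIndependent ℝ
      (fun m : (AX X : Set (Fin (n + 1) → ℤ)) => fun i => ((m : Fin (n + 1) → ℤ) i : ℝ))) :
    ∀ X₀ : Fin (n + 1) → ℝ,
      Module.finrank ℝ
          (affineSpan ℝ {X : Fin (n + 1) → ℝ | AX X = AX X₀}).direction
        = n + 2 - (AX X₀).card := by
  have hAX_eq : AX = maximizers A (monomialAffineMap v) := funext fun X => by
    ext m
    rw [hAX, Finset.mem_filter, mem_maximizers_iff_eq_sup' hA, htrop]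
    rfl
  subst hAX_eq
  intro X₀
  have hind : AffineIndependent ℝ
      fun m : (maximizers A (monomialAffineMap v) X₀ : Set (Fin (n + 1) → ℤ)) =>
        (monomialAffineMap v m).linear :=
    (hindep X₀).map' (dotProductEquiv ℝ _).toLinearMap.toAffineMap (dotProductEquiv ℝ _).injective
  have hdim := finrank_dualCoannihilator_vectorSpan_add_card
    (p := fun m => (monomialAffineMap v m).linear) (maximizers_nonempty hA X₀) hind
  rw [← direction_affineSpan_cell hA X₀, Module.finrank_fin_fun] at hdim
  change finrank ℝ (affineSpan ℝ (cell A _ X₀)).direction = _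
  omega
end

section
/- Let n ≥ 0, let A be a nonempty finite set of points of ℤ^{n+1}, let v : A → ℝ, define trop(F)(X) = max_{m∈A}(v(m) + ⟨m, X⟩), and for X ∈ ℝ^{n+1} let A_X := {m ∈ A : v(m) + ⟨m, X⟩ = trop(F)(X)}. Assume that A_X is affinely independent for every X ∈ ℝ^{n+1}. Then for every X ∈ ℝ^{n+1} and every nonempty subset S ⊆ A_X, there exists X' ∈ ℝ^{n+1} with A_{X'} = S. -/
/-!
Affine independence of `A_X` gives a linear functional `c` on `ℝ^{n+1}` which, up to an additive
constant, equals `1` on `S` and `0` on `A_X \ S`; so `S` is the set of maximizers of `⟨·, c⟩` on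
`A_X`. For small `ε > 0` the terms outside `A_X` stay strictly below the maximum at `X + ε c`, while
among the terms of `A_X` the perturbation selects the maximizers of `⟨·, c⟩`. Hence
`A_{X + ε c} = S`.
-/

open Filter Topology Finset

theorem LinearIndependent.exists_linearMap_apply_eq {K V ι : Type*} [Field K] [AddCommGroup V]
    [Module K V] {f : ι → V} (hf : LinearIndependent K f) (g : ι → K) :
    ∃ φ : V →ₗ[K] K, ∀ i, φ (f i) = g i := by
  obtain ⟨φ, hφ⟩ := LinearMap.exists_extend ((Module.Basis.span hf).constr K g)
  refine ⟨φ, fun i => ?_⟩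
  have hfi : f i = (Submodule.span K (Set.range f)).subtype (Module.Basis.span hf i) := by
    simp [Module.Basis.span_apply]
  rw [hfi, ← LinearMap.comp_apply, hφ, Module.Basis.constr_basis]

theorem AffineIndependent.exists_linearMap_add_const_eq {K V ι : Type*} [Field K]
    [AddCommGroup V] [Module K V] {p : ι → V} (hp : AffineIndependent K p) (g : ι → K) :
    ∃ (φ : V →ₗ[K] K) (d : K), ∀ i, φ (p i) + d = g i := by
  cases isEmpty_or_nonempty ι with
  | inl _ => exact ⟨0, 0, isEmptyElim⟩
  | inr hι =>
    obtain ⟨i₀⟩ := hι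
    obtain ⟨φ, hφ⟩ := ((affineIndependent_iff_linearIndependent_vsub K p i₀).mp hp)
      |>.exists_linearMap_apply_eq fun i => g i - g i₀
    refine ⟨φ, g i₀ - φ (p i₀), fun i => ?_⟩
    by_cases hi : i = i₀
    · subst hi; ring
    · have hφi := hφ ⟨i, hi⟩
      rw [vsub_eq_sub, map_sub] at hφi
      linear_combination hφi

theorem LinearMap.exists_eq_sum_mul {ι : Type*} [Fintype ι] (φ : (ι → ℝ) →ₗ[ℝ] ℝ) :
    ∃ c : ι → ℝ, ∀ x, φ x = ∑ i, x i * c i := by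
  classical
  exact ⟨fun i => φ fun j => if i = j then 1 else 0, φ.pi_apply_eq_sum_univ⟩

namespace Finset

variable {α β : Type*}

def maximizers [LinearOrder β] (A : Finset α) (f : α → β) : Finset α :=
  A.filter fun m => ∀ m' ∈ A, f m' ≤ f m

section LinearOrder

variable [LinearOrder β] {A S : Finset α} {f : α → β} {a b : α}

theorem mem_maximizers : a ∈ A.maximizers f ↔ a ∈ A ∧ ∀ b ∈ A, f b ≤ f a := mem_filter

theorem maximizers_subset : A.maximizers f ⊆ A := filter_subset _ _

theorem maximizers_nonempty (hA : A.Nonempty) : (A.maximizers f).Nonempty := by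
  obtain ⟨a, ha, hmax⟩ := A.exists_max_image f hA
  exact ⟨a, mem_maximizers.mpr ⟨ha, hmax⟩⟩

theorem eq_of_mem_maximizers (ha : a ∈ A.maximizers f) (hb : b ∈ A.maximizers f) :
    f a = f b :=
  le_antisymm ((mem_maximizers.mp hb).2 a (mem_maximizers.mp ha).1)
    ((mem_maximizers.mp ha).2 b (mem_maximizers.mp hb).1)

theorem lt_of_mem_maximizers_of_notMem_maximizers (ha : a ∈ A) (haT : a ∉ A.maximizers f)
    (hb : b ∈ A.maximizers f) : f a < f b := by
  rw [mem_maximizers] at haT hb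
  push Not at haT
  obtain ⟨c, hc, hlt⟩ := haT ha
  exact hlt.trans_le (hb.2 c hc)

theorem filter_eq_sup'_eq_maximizers (hA : A.Nonempty) (f : α → β) :
    A.filter (fun a => f a = A.sup' hA f) = A.maximizers f := by
  ext a
  simp only [mem_filter, mem_maximizers, and_congr_right_iff]
  exact fun ha => ⟨fun h b hb => h ▸ le_sup' f hb,
    fun h => le_antisymm (le_sup' f ha) (sup'_le hA f h)⟩

theorem maximizers_eq_of_eq_of_lt (hSA : S ⊆ A) (hS : S.Nonempty) (c : β)
    (hSc : ∀ a ∈ S, f a = c) (hlt : ∀ a ∈ A, a ∉ S → f a < c) : A.maximizers f = S := by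
  obtain ⟨a₀, ha₀⟩ := hS
  ext a
  rw [mem_maximizers]
  refine ⟨fun ⟨ha, hmax⟩ => ?_, fun ha => ⟨hSA ha, fun b hb => ?_⟩⟩
  · by_contra haS
    exact (hlt a ha haS).not_ge (hSc a₀ ha₀ ▸ hmax a₀ (hSA ha₀))
  · rw [hSc a ha]
    by_cases hbS : b ∈ S
    · exact (hSc b hbS).le
    · exact (hlt b hb hbS).le

end LinearOrder

theorem eventually_maximizers_add_mul (A : Finset α) (f g : α → ℝ) :
    ∀ᶠ ε in 𝓝[>] 0, A.maximizers (fun a => f a + ε * g a) = (A.maximizers f).maximizers g := by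
  classical
  set T := A.maximizers f
  have hsep : ∀ᶠ ε in 𝓝[>] (0 : ℝ), ∀ a ∈ A \ T, ∀ b ∈ T, f a + ε * g a < f b + ε * g b := by
    refine (eventually_all_finset _).mpr fun a ha => (eventually_all_finset _).mpr fun b hb => ?_
    rw [mem_sdiff] at ha
    have hlim : ∀ x, Tendsto (fun ε : ℝ => f x + ε * g x) (𝓝[>] 0) (𝓝 (f x)) := fun x =>
      ((continuous_const.add (continuous_id.mul continuous_const)).tendsto' 0 (f x)
        (by simp)).mono_left nhdsWithin_le_nhds
    exact (hlim a).eventually_lt (hlim b)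
      (lt_of_mem_maximizers_of_notMem_maximizers ha.1 ha.2 hb)
  filter_upwards [hsep, self_mem_nhdsWithin] with ε hsep (hε : 0 < ε)
  ext a
  simp only [mem_maximizers]
  constructor
  · rintro ⟨ha, hmax⟩
    have haT : a ∈ T := by
      by_contra haT
      obtain ⟨b, hb⟩ := maximizers_nonempty (f := f) ⟨a, ha⟩
      exact (hsep a (mem_sdiff.mpr ⟨ha, haT⟩) b hb).not_ge (hmax b (maximizers_subset hb))
    refine ⟨haT, fun b hb => ?_⟩
    have hba := hmax b (maximizers_subset hb)
    rw [eq_of_mem_maximizers hb haT] at hba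
    exact le_of_mul_le_mul_left (by linarith) hε
  · rintro ⟨haT, hmax⟩
    refine ⟨maximizers_subset haT, fun b hb => ?_⟩
    by_cases hbT : b ∈ T
    · rw [eq_of_mem_maximizers hbT haT]
      gcongr
      exact hmax b hbT
    · exact (hsep b (mem_sdiff.mpr ⟨hb, hbT⟩) a haT).le

end Finset

/-- For a smooth tropical hypersurface (all maximizer sets affinely independent),
every nonempty subset of a maximizer set `A_X` is itself the maximizer set `A_{X'}`
at some point `X'`. -/
theorem stmt_9 (n : ℕ) (A : Finset (Fin (n + 1) → ℤ)) (hA : A.Nonempty)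
    (v : (Fin (n + 1) → ℤ) → ℝ)
    (trop : (Fin (n + 1) → ℝ) → ℝ)
    (htrop : ∀ X, trop X = A.sup' hA fun m => v m + ∑ i, (m i : ℝ) * X i)
    (AX : (Fin (n + 1) → ℝ) → Finset (Fin (n + 1) → ℤ))
    (hAX : ∀ X, AX X = A.filter fun m => v m + ∑ i, (m i : ℝ) * X i = trop X)
    (hindep : ∀ X, AffineIndependent ℝ
      (fun m : (AX X : Set (Fin (n + 1) → ℤ)) => fun i => ((m : Fin (n + 1) → ℤ) i : ℝ))) :
    ∀ X : Fin (n + 1) → ℝ, ∀ S : Finset (Fin (n + 1) → ℤ),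
      S ⊆ AX X → S.Nonempty → ∃ X' : Fin (n + 1) → ℝ, AX X' = S := by
  intro X S hS hSne
  have hAX_eq : ∀ Y, AX Y = A.maximizers fun m => v m + ∑ i, (m i : ℝ) * Y i := fun Y => by
    rw [hAX, htrop, filter_eq_sup'_eq_maximizers]
  obtain ⟨φ, d, hφ⟩ := (hindep X).exists_linearMap_add_const_eq
    fun m => if (m : Fin (n + 1) → ℤ) ∈ S then 1 else 0
  obtain ⟨c, hc⟩ := φ.exists_eq_sum_mul
  have hSc : (AX X).maximizers (fun m => ∑ i, (m i : ℝ) * c i) = S := by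
    refine maximizers_eq_of_eq_of_lt hS hSne (1 - d) (fun m hm => ?_) fun m hm hmS => ?_
    · have := hφ ⟨m, hS hm⟩
      simp only [hm, if_true, hc] at this
      linarith
    · have := hφ ⟨m, hm⟩
      simp only [hmS, if_false, hc] at this
      linarith
  obtain ⟨ε, hε⟩ := (eventually_maximizers_add_mul A (fun m => v m + ∑ i, (m i : ℝ) * X i)
    fun m => ∑ i, (m i : ℝ) * c i).exists
  refine ⟨X + ε • c, ?_⟩
  rw [hAX_eq, ← hSc, hAX_eq, ← hε]
  congr 1
  funext m
  simp only [Pi.add_apply, Pi.smul_apply, smul_eq_mul, mul_add, sum_add_distrib, mul_sum,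
    mul_left_comm, add_assoc]
end
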